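/- Let (E, Φ) be a representation of a Euclidean Jordan algebra J with quadratic map Q: E → J, c a CSOI, and Q_j: E_j → J_j the quadratic maps of the restricted representations. Then for ξ = ξ₁+⋯+ξ_k ∈ E = ⊕E_j, the orthogonal projection of Q(ξ) onto J(c) equals Σ_j Q_j(ξ_j). -/

import Mathlib

/-!
`Q(ξ) - Σ_j Q_j(ξ_j)` is orthogonal to each Peirce space `J₁(c_i)`. For `x ∈ J₁(c_i)` the
operator `Φ(x)` commutes with the projection `Φ(c_i)` and is absorbed by it, so
`(Q(ξ), x) = ⟨Φ(x)ξ, ξ⟩ = ⟨Φ(x)ξ_i, ξ_i⟩ = (Q_i(ξ_i), x)`. For `j ≠ i`,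
`(Q_j(ξ_j), x) = 0` since `c_j` annihilates `J₁(c_i)`: compare the relation
`2L³ - 3L² + L = 0` satisfied by the multiplication operators of the idempotents `c_j` and
`c_i + c_j`.
-/

open scoped RealInnerProductSpace

/-- A Euclidean Jordan algebra structure on a finite-dimensional real inner
product space: a commutative bilinear product satisfying the Jordan identity,
with unit `one`, such that the inner product is associative. -/
structure EJA (J : Type) [NormedAddCommGroup J] [InnerProductSpace ℝ J] : Type where
  mul : J →ₗ[ℝ] J →ₗ[ℝ] J
  comm : ∀ x y : J, mul x y = mul y x
  jordan : ∀ x y : J, mul (mul x y) (mul x x) = mul x (mul y (mul x x))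
  one : J
  one_mul : ∀ x : J, mul one x = x
  assoc_inner : ∀ x y z : J, ⟪mul x y, z⟫ = ⟪y, mul x z⟫

variable {J : Type} [NormedAddCommGroup J] [InnerProductSpace ℝ J] [FiniteDimensional ℝ J]

/-- The Peirce `μ`-eigenspace of the idempotent `c`. -/
noncomputable def EJA.peirce (A : EJA J) (c : J) (μ : ℝ) : Submodule ℝ J :=
  Module.End.eigenspace (A.mul c : Module.End ℝ J) μ

/-- A complete system of orthogonal idempotents. -/
def EJA.IsCSOI (A : EJA J) {k : ℕ} (c : Fin k → J) : Prop :=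
  (∀ j, A.mul (c j) (c j) = c j) ∧ (∀ i j, i ≠ j → A.mul (c i) (c j) = 0) ∧
    (∑ j, c j) = A.one

/-- `y` is the Jordan inverse of `x`:  `x∘y = e` and `x²∘y = x`. -/
def EJA.IsInv (A : EJA J) (x y : J) : Prop :=
  A.mul x y = A.one ∧ A.mul (A.mul x x) y = x

variable {E : Type} [NormedAddCommGroup E] [InnerProductSpace ℝ E] [FiniteDimensional ℝ E]

/-- A representation of the Euclidean Jordan algebra `J` on the Euclidean
space `E`: a unital Jordan algebra morphism into symmetric endomorphisms. -/
def EJA.IsRep (A : EJA J) (Φ : J →ₗ[ℝ] E →ₗ[ℝ] E) : Prop :=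
  (∀ (x : J) (ξ η : E), ⟪Φ x ξ, η⟫ = ⟪ξ, Φ x η⟫) ∧
  (∀ x y : J, Φ (A.mul x y) = (2 : ℝ)⁻¹ • (Φ x ∘ₗ Φ y + Φ y ∘ₗ Φ x)) ∧
  Φ A.one = LinearMap.id

/-- The subspace `E_j`: the `1`-eigenspace of the projection `Φ(c_j)`. -/
noncomputable def EJA.repSpace (A : EJA J) (Φ : J →ₗ[ℝ] E →ₗ[ℝ] E)
    {k : ℕ} (c : Fin k → J) (j : Fin k) : Submodule ℝ E :=
  Module.End.eigenspace (Φ (c j) : Module.End ℝ E) 1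

namespace EJA

section

variable {J : Type} [NormedAddCommGroup J] [InnerProductSpace ℝ J] (A : EJA J)

lemma mem_peirce_one_iff {c x : J} : x ∈ A.peirce c 1 ↔ A.mul c x = x := by
  rw [peirce, Module.End.mem_eigenspace_iff, one_smul]

lemma jordan_polarized (x z y : J) :
    A.mul (A.mul z y) (A.mul x x) + (2 : ℝ) • A.mul (A.mul x y) (A.mul x z)
      = A.mul z (A.mul y (A.mul x x)) + (2 : ℝ) • A.mul x (A.mul y (A.mul x z)) := by
  have hplus := A.jordan (x + z) y
  have hminus := A.jordan (x - z) y
  have hz := A.jordan z y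
  simp only [map_add, map_sub, LinearMap.add_apply, LinearMap.sub_apply] at hplus hminus
  rw [A.comm z x] at hplus hminus
  linear_combination (norm := module) (2 : ℝ)⁻¹ • hplus - (2 : ℝ)⁻¹ • hminus - hz

lemma two_mul_cube_add_mul_of_idem {p : J} (hp : A.mul p p = p) (z : J) :
    (2 : ℝ) • A.mul p (A.mul p (A.mul p z)) + A.mul p z =
      (3 : ℝ) • A.mul p (A.mul p z) := by
  have h := A.jordan_polarized p z p
  simp only [hp] at h
  rw [A.comm z p, A.comm (A.mul p z) p] at h
  linear_combination (norm := module) -h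

lemma mul_mul_comm_of_idem_of_mul_eq_zero {c d : J} (hd : A.mul d d = d) (hdc : A.mul d c = 0)
    (y : J) : A.mul c (A.mul d y) = A.mul d (A.mul c y) := by
  have h := A.jordan_polarized d c y
  rw [hd, hdc] at h
  simp only [map_zero, smul_zero, add_zero] at h
  rw [A.comm d y, A.comm d (A.mul c y)]
  exact h.symm

lemma mul_eq_zero_of_mem_peirce_one {c d : J} (hc : A.mul c c = c) (hd : A.mul d d = d)
    (hcd : A.mul c d = 0) {v : J} (hv : v ∈ A.peirce d 1) : A.mul c v = 0 := by
  rw [mem_peirce_one_iff] at hv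
  have hdc : A.mul d c = 0 := by rw [A.comm, hcd]
  have hcomm := A.mul_mul_comm_of_idem_of_mul_eq_zero hd hdc
  have hdcv : A.mul d (A.mul c v) = A.mul c v := by rw [← hcomm, hv]
  have hdccv : A.mul d (A.mul c (A.mul c v)) = A.mul c (A.mul c v) := by rw [← hcomm, hdcv]
  have hcd_idem : A.mul (c + d) (c + d) = c + d := by
    simp only [map_add, LinearMap.add_apply, hc, hd, hcd, hdc, add_zero, zero_add]
  have hcub_c := A.two_mul_cube_add_mul_of_idem hc v
  have hcub_cd := A.two_mul_cube_add_mul_of_idem hcd_idem v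
  simp only [map_add, LinearMap.add_apply, hv, hdcv, hdccv] at hcub_cd
  have hsq : A.mul c (A.mul c v) = 0 := by
    have h6 : (6 : ℝ) • A.mul c (A.mul c v) = 0 := by
      linear_combination (norm := module) hcub_cd - hcub_c
    exact (smul_eq_zero.mp h6).resolve_left (by norm_num)
  rw [← inner_self_eq_zero (𝕜 := ℝ), A.assoc_inner, hsq, inner_zero_right]

lemma inner_eq_zero_of_mem_peirce_one {c d : J} (hc : A.mul c c = c) (hd : A.mul d d = d)
    (hcd : A.mul c d = 0) {u v : J} (hu : u ∈ A.peirce c 1) (hv : v ∈ A.peirce d 1) :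
    ⟪u, v⟫ = 0 := by
  rw [← (A.mem_peirce_one_iff).mp hu, A.assoc_inner,
    A.mul_eq_zero_of_mem_peirce_one hc hd hcd hv, inner_zero_right]

lemma inner_sum_eq_of_mem_peirce_one {k : ℕ} {c : Fin k → J}
    (hidem : ∀ j, A.mul (c j) (c j) = c j) (horth : ∀ i j, i ≠ j → A.mul (c i) (c j) = 0)
    {u : Fin k → J} (hu : ∀ j, u j ∈ A.peirce (c j) 1) {i : Fin k} {x : J}
    (hx : x ∈ A.peirce (c i) 1) :
    ⟪∑ j, u j, x⟫ = ⟪u i, x⟫ := by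
  rw [sum_inner, Finset.sum_eq_single_of_mem i (Finset.mem_univ i)]
  intro j _ hji
  exact A.inner_eq_zero_of_mem_peirce_one (hidem j) (hidem i) (horth j i hji) (hu j) hx

variable {E : Type} [NormedAddCommGroup E] [InnerProductSpace ℝ E]
variable {A} {Φ : J →ₗ[ℝ] E →ₗ[ℝ] E}

lemma IsRep.map_mul_apply (hΦ : A.IsRep Φ) (x y : J) (η : E) :
    Φ (A.mul x y) η = (2 : ℝ)⁻¹ • (Φ x (Φ y η) + Φ y (Φ x η)) := by
  rw [hΦ.2.1]
  rfl

lemma IsRep.map_apply_map_of_idem (hΦ : A.IsRep Φ) {p : J} (hp : A.mul p p = p) (η : E) :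
    Φ p (Φ p η) = Φ p η := by
  have h := hΦ.map_mul_apply p p η
  rw [hp] at h
  linear_combination (norm := module) -h

lemma IsRep.map_comm_of_mem_peirce_one (hΦ : A.IsRep Φ) {p x : J} (hp : A.mul p p = p)
    (hx : x ∈ A.peirce p 1) (η : E) : Φ p (Φ x η) = Φ x (Φ p η) := by
  have hxη := hΦ.map_mul_apply p x η
  rw [(A.mem_peirce_one_iff).mp hx] at hxη
  have hpxη := congrArg (Φ p) hxη
  rw [map_smul, map_add, hΦ.map_apply_map_of_idem hp] at hpxη
  have hpxpη := hΦ.map_mul_apply p x (Φ p η)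
  rw [(A.mem_peirce_one_iff).mp hx, hΦ.map_apply_map_of_idem hp] at hpxpη
  linear_combination (norm := module) (2 : ℝ) • hpxη - (2 : ℝ) • hpxpη

lemma IsRep.map_apply_map_of_mem_peirce_one (hΦ : A.IsRep Φ) {p x : J} (hp : A.mul p p = p)
    (hx : x ∈ A.peirce p 1) (η : E) : Φ x (Φ p η) = Φ x η := by
  have h := hΦ.map_mul_apply p x η
  rw [(A.mem_peirce_one_iff).mp hx, hΦ.map_comm_of_mem_peirce_one hp hx] at h
  linear_combination (norm := module) -h

lemma IsRep.inner_map_apply_self_of_mem_peirce_one (hΦ : A.IsRep Φ) {p x : J}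
    (hp : A.mul p p = p) (hx : x ∈ A.peirce p 1) (ξ : E) :
    ⟪Φ x (Φ p ξ), Φ p ξ⟫ = ⟪Φ x ξ, ξ⟫ := by
  rw [← hΦ.1, hΦ.map_comm_of_mem_peirce_one hp hx, hΦ.map_apply_map_of_idem hp,
    hΦ.map_apply_map_of_mem_peirce_one hp hx]

end

end EJA

/-- The orthogonal projection onto `J(c)` of `Q(ξ)` equals `Σ_j Q_j(ξ_j)`,
where `ξ_j = Φ(c_j)ξ` and `Q`, `Q_j` are the quadratic maps of the
representation and of its restrictions. -/
theorem stmt12 (A : EJA J) (Φ : J →ₗ[ℝ] E →ₗ[ℝ] E) (hΦ : A.IsRep Φ)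
    (k : ℕ) (c : Fin k → J) (hc : A.IsCSOI c)
    (Q : E → J) (hQ : ∀ (ξ : E) (x : J), ⟪Q ξ, x⟫ = ⟪Φ x ξ, ξ⟫)
    (Qj : Fin k → E → J)
    (hQj : ∀ (j : Fin k), ∀ ξ ∈ A.repSpace Φ c j,
      Qj j ξ ∈ A.peirce (c j) 1 ∧
        ∀ x ∈ A.peirce (c j) 1, ⟪Qj j ξ, x⟫ = ⟪Φ x ξ, ξ⟫) :
    ∀ ξ : E,
      ((Submodule.orthogonalProjectionOnto (⨆ j, A.peirce (c j) 1) (Q ξ) : J))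
        = ∑ j, Qj j (Φ (c j) ξ) := by
  intro ξ
  obtain ⟨hidem, horth, -⟩ := hc
  have hξ : ∀ j, Φ (c j) ξ ∈ A.repSpace Φ c j := fun j => by
    rw [EJA.repSpace, Module.End.mem_eigenspace_iff, one_smul]
    exact hΦ.map_apply_map_of_idem (hidem j) ξ
  have hQjξ : ∀ j, Qj j (Φ (c j) ξ) ∈ A.peirce (c j) 1 := fun j => (hQj j _ (hξ j)).1
  rw [← Submodule.starProjection_apply]
  refine Submodule.eq_starProjection_of_mem_orthogonal
    (Submodule.sum_mem _ fun j _ => Submodule.mem_iSup_of_mem j (hQjξ j)) ?_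
  rw [← Submodule.iInf_orthogonal, Submodule.mem_iInf]
  intro i
  rw [Submodule.mem_orthogonal']
  intro x hx
  rw [inner_sub_left, A.inner_sum_eq_of_mem_peirce_one hidem horth hQjξ hx,
    hQ, (hQj i _ (hξ i)).2 x hx, hΦ.inner_map_apply_self_of_mem_peirce_one (hidem i) hx, sub_self]
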